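/- Let γ¹, ..., γⁿ ∈ (ℝ ∪ i(-π,π))² be pairwise distinct. A sufficiently smooth F : ℝ² → ℂ satisfies Δ_{t₁v¹}^{γ¹} Δ_{t₂v²}^{γ²} ⋯ Δ_{tₙvⁿ}^{γⁿ} F = 0 for all nonzero vectors tᵢvᵢ ∈ ℝ² (tᵢ > 0, vᵢ unit vectors) if and only if F(z) = Σ_{ℓ=1}^n c_ℓ exp((γ^ℓ)ᵀ z) for some c_ℓ ∈ ℂ. -/

import Mathlib

/-- Pairing of a complex frequency vector with a real vector: `μᵀ v`. -/
noncomputable def dotCR (μ : Fin 2 → ℂ) (v : Fin 2 → ℝ) : ℂ :=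
  μ 0 * (v 0 : ℂ) + μ 1 * (v 1 : ℂ)

/-- The differential operator `D_v^γ F (z) = (∇F(z) - γ F(z))ᵀ v`. -/
noncomputable def Dop (v : Fin 2 → ℝ) (γ : Fin 2 → ℂ)
    (F : (Fin 2 → ℝ) → ℂ) : (Fin 2 → ℝ) → ℂ :=
  fun z => fderiv ℝ F z v - dotCR γ v * F z

/-- The difference operator `Δ_w^γ F (z) = F(z + w) - exp(γᵀ w) F(z)`. -/
noncomputable def DeltaOp (w : Fin 2 → ℝ) (γ : Fin 2 → ℂ)
    (F : (Fin 2 → ℝ) → ℂ) : (Fin 2 → ℝ) → ℂ :=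
  fun z => F (z + w) - Complex.exp (dotCR γ w) * F z

lemma dotCR_add (μ : Fin 2 → ℂ) (v w : Fin 2 → ℝ) :
    dotCR μ (v + w) = dotCR μ v + dotCR μ w := by
  simp only [dotCR, Pi.add_apply]
  push_cast
  ring

lemma dotCR_zero (μ : Fin 2 → ℂ) : dotCR μ 0 = 0 := by
  simp [dotCR]

/-- If `exp (t δ) = 1` for all real `t`, then `δ = 0`. -/
lemma delta_eq_zero (δ : ℂ) (h : ∀ t : ℝ, Complex.exp (t * δ) = 1) : δ = 0 := by
  have hre : δ.re = 0 := by
    have h1 := congrArg (‖·‖) (h 1)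
    rw [Complex.norm_exp, norm_one] at h1
    have : ((1 : ℝ) : ℂ) * δ = δ := by norm_num
    rw [this] at h1
    have h2 : Real.exp δ.re = Real.exp 0 := by rw [h1, Real.exp_zero]
    exact Real.exp_injective h2
  have him : δ.im = 0 := by
    by_contra hb
    have ht := h (Real.pi / δ.im)
    have harg : ((Real.pi / δ.im : ℝ) : ℂ) * δ = Real.pi * Complex.I := by
      apply Complex.ext
      · simp [Complex.mul_re, Complex.ofReal_re, Complex.ofReal_im, hre]
      · simp only [Complex.mul_im, Complex.ofReal_re, Complex.ofReal_im, hre,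
          Complex.mul_re, Complex.I_re, Complex.I_im, Complex.ofReal_re]
        field_simp
    rw [harg, Complex.exp_pi_mul_I] at ht
    norm_num at ht
  exact Complex.ext hre him

/-- Characters determined by frequencies: injectivity. -/
lemma exp_dotCR_inj {μ β : Fin 2 → ℂ}
    (h : ∀ w : Fin 2 → ℝ, Complex.exp (dotCR μ w) = Complex.exp (dotCR β w)) : μ = β := by
  have key : ∀ (a b : ℂ), (∀ t : ℝ, Complex.exp (a * t) = Complex.exp (b * t)) → a = b := by
    intro a b hab
    have : ∀ t : ℝ, Complex.exp ((t : ℂ) * (a - b)) = 1 := by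
      intro t
      have := hab t
      rw [show (t : ℂ) * (a - b) = a * t - b * t by ring, Complex.exp_sub, this,
        div_self (Complex.exp_ne_zero _)]
    have := delta_eq_zero _ this
    linear_combination this
  funext i
  fin_cases i
  · refine key _ _ (fun t => ?_)
    have := h (fun j => if j = 0 then t else 0)
    simpa [dotCR] using this
  · refine key _ _ (fun t => ?_)
    have := h (fun j => if j = 0 then 0 else t)
    simpa [dotCR] using this

/-- The character of `(Fin 2 → ℝ, +)` attached to a complex frequency vector. -/
noncomputable def expChar (μ : Fin 2 → ℂ) : Multiplicative (Fin 2 → ℝ) →* ℂ where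
  toFun w := Complex.exp (dotCR μ (Multiplicative.toAdd w))
  map_one' := by simp [dotCR_zero]
  map_mul' w w' := by simp [dotCR_add, Complex.exp_add]

lemma expChar_injective : Function.Injective expChar := by
  intro μ β h
  apply exp_dotCR_inj
  intro w
  exact DFunLike.congr_fun h (Multiplicative.ofAdd w)

/-- Linear independence of distinct exponentials. -/
lemma sum_exp_eq_zero {n : ℕ} {μ : Fin n → Fin 2 → ℂ} (hμ : Function.Injective μ)
    {a : Fin n → ℂ} (h : ∀ z, ∑ ℓ, a ℓ * Complex.exp (dotCR (μ ℓ) z) = 0) :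
    ∀ ℓ, a ℓ = 0 := by
  have li : LinearIndependent ℂ (fun ℓ : Fin n => ⇑(expChar (μ ℓ))) :=
    (linearIndependent_monoidHom (Multiplicative (Fin 2 → ℝ)) ℂ).comp
      (fun ℓ => expChar (μ ℓ)) (expChar_injective.comp hμ)
  refine Fintype.linearIndependent_iff.mp li a ?_
  funext w
  have := h (Multiplicative.toAdd w)
  simpa [expChar, Finset.sum_apply] using this

/-- Core analytic lemma: from the one-step difference equation with exponential
inhomogeneity, deduce the exponential form of `F`. -/
lemma core_lemma {n : ℕ} (μ : Fin n → Fin 2 → ℂ) (hμ : Function.Injective μ)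
    (β : Fin 2 → ℂ) (hβ : ∀ ℓ, μ ℓ ≠ β) (F : (Fin 2 → ℝ) → ℂ)
    (h : ∀ w : Fin 2 → ℝ, ∃ d : Fin n → ℂ, ∀ z,
      F (z + w) = Complex.exp (dotCR β w) * F z + ∑ ℓ, d ℓ * Complex.exp (dotCR (μ ℓ) z)) :
    ∃ (c : Fin n → ℂ) (c' : ℂ), ∀ z,
      F z = (∑ ℓ, c ℓ * Complex.exp (dotCR (μ ℓ) z)) + c' * Complex.exp (dotCR β z) := by
  classical
  choose d hd using h
  have coc : ∀ w w' (ℓ : Fin n),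
      d (w + w') ℓ = d w' ℓ * Complex.exp (dotCR (μ ℓ) w)
        + Complex.exp (dotCR β w') * d w ℓ := by
    intro w w'
    have expand : ∀ z, ∑ ℓ, (d (w + w') ℓ - (d w' ℓ * Complex.exp (dotCR (μ ℓ) w)
        + Complex.exp (dotCR β w') * d w ℓ)) * Complex.exp (dotCR (μ ℓ) z) = 0 := by
      intro z
      have h1 := hd (w + w') z
      have h2 := hd w' (z + w)
      have h3 := hd w z
      rw [show z + (w + w') = z + w + w' from (add_assoc z w w').symm,
        dotCR_add β w w', Complex.exp_add] at h1
      have e1 : ∀ ℓ ∈ Finset.univ, (d (w + w') ℓ - (d w' ℓ * Complex.exp (dotCR (μ ℓ) w)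
          + Complex.exp (dotCR β w') * d w ℓ)) * Complex.exp (dotCR (μ ℓ) z)
          = d (w + w') ℓ * Complex.exp (dotCR (μ ℓ) z)
            - d w' ℓ * Complex.exp (dotCR (μ ℓ) (z + w))
            - Complex.exp (dotCR β w') * (d w ℓ * Complex.exp (dotCR (μ ℓ) z)) := by
        intro ℓ _
        rw [dotCR_add, Complex.exp_add]
        ring
      rw [Finset.sum_congr rfl e1, Finset.sum_sub_distrib, Finset.sum_sub_distrib,
        ← Finset.mul_sum]
      linear_combination h2 + Complex.exp (dotCR β w') * h3 - h1
    intro ℓ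
    have := sum_exp_eq_zero hμ expand ℓ
    linear_combination this
  have sym : ∀ w w' (ℓ : Fin n),
      d w ℓ * (Complex.exp (dotCR (μ ℓ) w') - Complex.exp (dotCR β w'))
        = d w' ℓ * (Complex.exp (dotCR (μ ℓ) w) - Complex.exp (dotCR β w)) := by
    intro w w' ℓ
    have c1 := coc w w' ℓ
    have c2 := coc w' w ℓ
    rw [add_comm w' w] at c2
    linear_combination c1 - c2
  have hw0 : ∀ ℓ : Fin n, ∃ w0 : Fin 2 → ℝ,
      Complex.exp (dotCR (μ ℓ) w0) ≠ Complex.exp (dotCR β w0) := by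
    intro ℓ
    by_contra hc
    push_neg at hc
    exact hβ ℓ (exp_dotCR_inj hc)
  choose w0 hw0' using hw0
  set cval : Fin n → ℂ := fun ℓ => d (w0 ℓ) ℓ /
    (Complex.exp (dotCR (μ ℓ) (w0 ℓ)) - Complex.exp (dotCR β (w0 ℓ))) with hcval
  have hdval : ∀ (w : Fin 2 → ℝ) (ℓ : Fin n),
      d w ℓ = cval ℓ * (Complex.exp (dotCR (μ ℓ) w) - Complex.exp (dotCR β w)) := by
    intro w ℓ
    have hne : Complex.exp (dotCR (μ ℓ) (w0 ℓ)) - Complex.exp (dotCR β (w0 ℓ)) ≠ 0 :=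
      sub_ne_zero.mpr (hw0' ℓ)
    rw [hcval]
    rw [div_mul_eq_mul_div, eq_div_iff hne]
    exact sym w (w0 ℓ) ℓ
  refine ⟨cval, F 0 - ∑ ℓ, cval ℓ, fun z => ?_⟩
  have h0 := hd z 0
  rw [zero_add] at h0
  simp only [dotCR_zero, Complex.exp_zero, mul_one] at h0
  rw [h0]
  have hterm : ∀ ℓ ∈ Finset.univ, d z ℓ
      = cval ℓ * Complex.exp (dotCR (μ ℓ) z) - cval ℓ * Complex.exp (dotCR β z) := by
    intro ℓ _
    rw [hdval]
    ring
  rw [Finset.sum_congr rfl hterm, Finset.sum_sub_distrib, ← Finset.sum_mul]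
  ring

/-- Any nonzero vector is a positive multiple of a unit vector. -/
lemma exists_tv {w : Fin 2 → ℝ} (hw : w ≠ 0) :
    ∃ (t : ℝ) (v : Fin 2 → ℝ), 0 < t ∧ v 0 ^ 2 + v 1 ^ 2 = 1 ∧ t • v = w := by
  have hpos : 0 < w 0 ^ 2 + w 1 ^ 2 := by
    rcases Function.ne_iff.mp hw with ⟨j, hj⟩
    simp only [Pi.zero_apply] at hj
    fin_cases j
    · have : 0 < w 0 ^ 2 := by positivity
      nlinarith [sq_nonneg (w 1)]
    · have : 0 < w 1 ^ 2 := by positivity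
      nlinarith [sq_nonneg (w 0)]
  set t := Real.sqrt (w 0 ^ 2 + w 1 ^ 2) with htdef
  have ht : 0 < t := Real.sqrt_pos.mpr hpos
  have ht2 : t ^ 2 = w 0 ^ 2 + w 1 ^ 2 := Real.sq_sqrt hpos.le
  refine ⟨t, fun j => w j / t, ht, ?_, ?_⟩
  · rw [div_pow, div_pow, ← add_div, ht2, div_self hpos.ne']
  · funext j
    simp only [Pi.smul_apply, smul_eq_mul]
    field_simp

/-- Rewriting the iterated difference operator applied to a sum of exponentials. -/
lemma foldr_delta {n : ℕ} (γ : Fin n → Fin 2 → ℂ) (w : Fin n → Fin 2 → ℝ)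
    (c : Fin n → ℂ) (l : List (Fin n)) (z : Fin 2 → ℝ) :
    (l.foldr (fun i G => DeltaOp (w i) (γ i) G)
      (fun z => ∑ ℓ, c ℓ * Complex.exp (dotCR (γ ℓ) z))) z
    = ∑ ℓ, c ℓ * (l.map (fun i => Complex.exp (dotCR (γ ℓ) (w i))
        - Complex.exp (dotCR (γ i) (w i)))).prod * Complex.exp (dotCR (γ ℓ) z) := by
  induction l generalizing z with
  | nil => simp
  | cons i l ih =>
    simp only [List.foldr_cons, DeltaOp, List.map_cons, List.prod_cons]
    rw [ih (z + w i), ih z, Finset.mul_sum, ← Finset.sum_sub_distrib]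
    refine Finset.sum_congr rfl (fun ℓ _ => ?_)
    rw [dotCR_add, Complex.exp_add]
    ring

/-- Forward direction, by induction on the number of frequencies. -/
lemma fwd_lemma : ∀ (n : ℕ) (γ : Fin n → Fin 2 → ℂ), Function.Injective γ →
    ∀ F : (Fin 2 → ℝ) → ℂ,
    (∀ w : Fin n → Fin 2 → ℝ, (∀ i, w i ≠ 0) →
      ∀ z, ((List.finRange n).foldr (fun i G => DeltaOp (w i) (γ i) G) F) z = 0) →
    ∃ c : Fin n → ℂ, ∀ z, F z = ∑ ℓ, c ℓ * Complex.exp (dotCR (γ ℓ) z) := by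
  intro n
  induction n with
  | zero =>
    intro γ _ F h
    refine ⟨0, fun z => ?_⟩
    have := h (fun i => i.elim0) (fun i => i.elim0) z
    simpa using this
  | succ n ih =>
    intro γ hγ F h
    have hstep : ∀ w : Fin 2 → ℝ, ∃ d : Fin n → ℂ, ∀ z,
        F (z + w) = Complex.exp (dotCR (γ (Fin.last n)) w) * F z
          + ∑ ℓ, d ℓ * Complex.exp (dotCR (γ ℓ.castSucc) z) := by
      intro w
      by_cases hw : w = 0
      · refine ⟨0, fun z => ?_⟩
        simp [hw, dotCR_zero]
      · have hres := ih (fun ℓ => γ ℓ.castSucc) (hγ.comp (Fin.castSucc_injective n))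
          (DeltaOp w (γ (Fin.last n)) F) ?_
        · obtain ⟨d, hdd⟩ := hres
          refine ⟨d, fun z => ?_⟩
          have := hdd z
          simp only [DeltaOp] at this
          linear_combination this
        · intro w' hw' z
          have hfull := h (Fin.snoc w' w) (fun i => by
            refine Fin.lastCases ?_ ?_ i
            · simpa [Fin.snoc_last] using hw
            · intro j; simpa [Fin.snoc_castSucc] using hw' j) z
          rw [List.finRange_succ_last, List.foldr_append, List.foldr_cons, List.foldr_nil,
            List.foldr_map] at hfull
          simp only [Fin.snoc_last, Fin.snoc_castSucc] at hfull
          exact hfull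
    have hne : ∀ ℓ : Fin n, γ ℓ.castSucc ≠ γ (Fin.last n) := by
      intro ℓ hc
      exact absurd (hγ hc) (Fin.castSucc_lt_last ℓ).ne
    obtain ⟨c, c', hc⟩ := core_lemma (fun ℓ => γ ℓ.castSucc)
      (hγ.comp (Fin.castSucc_injective n)) (γ (Fin.last n)) hne F hstep
    refine ⟨Fin.snoc c c', fun z => ?_⟩
    rw [Fin.sum_univ_castSucc]
    simp only [Fin.snoc_castSucc, Fin.snoc_last]
    exact hc z

/-- Theorem 2.8: `Δ_{t₁v¹}^{γ¹} ⋯ Δ_{tₙvⁿ}^{γⁿ} F = 0` for all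
nonzero vectors `tᵢvᵢ` iff `F` is a linear combination of `exp((γ^ℓ)ᵀ z)`,
where the pairwise distinct frequencies lie in `(ℝ ∪ i(-π,π))²`. -/
theorem stmt12 (n : ℕ) (γ : Fin n → Fin 2 → ℂ) (hinj : Function.Injective γ)
    (hdom : ∀ ℓ i, (γ ℓ i).im = 0 ∨
      ((γ ℓ i).re = 0 ∧ (γ ℓ i).im ∈ Set.Ioo (-Real.pi) Real.pi))
    (F : (Fin 2 → ℝ) → ℂ) (hF : ContDiff ℝ (⊤ : ℕ∞) F) :
    (∀ (t : Fin n → ℝ) (v : Fin n → Fin 2 → ℝ),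
      (∀ i, 0 < t i) → (∀ i, (v i) 0 ^ 2 + (v i) 1 ^ 2 = 1) →
      ∀ z, ((List.finRange n).foldr (fun i G => DeltaOp (t i • v i) (γ i) G) F) z = 0) ↔
    ∃ c : Fin n → ℂ, ∀ z, F z = ∑ ℓ, c ℓ * Complex.exp (dotCR (γ ℓ) z) := by
  constructor
  · intro h
    apply fwd_lemma n γ hinj F
    intro w hw z
    choose t v ht hv htv using fun i => exists_tv (hw i)
    have hfun : (fun (i : Fin n) (G : (Fin 2 → ℝ) → ℂ) => DeltaOp (t i • v i) (γ i) G)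
        = fun i G => DeltaOp (w i) (γ i) G := by
      funext i G
      rw [htv i]
    have := h t v ht hv z
    rwa [hfun] at this
  · rintro ⟨c, hc⟩ t v ht hv z
    have hF' : F = fun z => ∑ ℓ, c ℓ * Complex.exp (dotCR (γ ℓ) z) := funext hc
    rw [hF', foldr_delta γ (fun i => t i • v i) c (List.finRange n) z]
    refine Finset.sum_eq_zero (fun ℓ _ => ?_)
    have : ((List.finRange n).map (fun i => Complex.exp (dotCR (γ ℓ) (t i • v i))
        - Complex.exp (dotCR (γ i) (t i • v i)))).prod = 0 := by
      apply List.prod_eq_zero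
      exact List.mem_map.mpr ⟨ℓ, List.mem_finRange ℓ, sub_self _⟩
    rw [this, mul_zero, zero_mul]
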